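/- arXiv:1203.6648 — 4 statements merged into one kernel-verified Lean document; each statement's English description precedes it below -/
import Mathlib

section
/- Let p be an odd prime, a ≥ 2 an integer, and S an (n+1)×(n+1) integer matrix with |det S| = d odd, square-free, and divisible by p. If M is an (n+1)×(n+1) matrix over ℤ/p^a with Mᵀ S M = S in ℤ/p^a, then det M is a unit in ℤ/p^a; in particular M is invertible over ℤ/p^a. -/
/-!
Taking determinants in `Mᵀ S M = S` gives `(det M)² · det S = det S` in `ℤ/p^a`. Lifting `det M`
to an integer `k`, this says `p^a ∣ (k² - 1) det S`. Since `p²` does not divide the square-free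
`det S` and `a ≥ 2`, already `p ∣ k² - 1`; hence `p ∤ k`, and `k` is a unit modulo `p^a`.
-/

open Matrix

theorem Prime.dvd_of_sq_dvd_mul_of_not_sq_dvd {α : Type*} [CommMonoidWithZero α]
    [IsCancelMulZero α]
    {p t c : α} (hp : Prime p) (hc : ¬p ^ 2 ∣ c) (h : p ^ 2 ∣ t * c) : p ∣ t :=
  by_contra fun ht => hc (hp.pow_dvd_of_dvd_mul_left 2 ht h)

theorem Matrix.det_sq_mul_det_eq_of_transpose_mul_mul_eq {m R : Type*} [Fintype m]
    [DecidableEq m] [CommRing R] {M S : Matrix m m R} (h : Mᵀ * S * M = S) :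
    M.det ^ 2 * S.det = S.det := by
  simpa only [det_mul, det_transpose, sq, mul_right_comm] using congrArg det h

theorem ZMod.isUnit_of_sq_mul_eq {p a : ℕ} (hp : p.Prime) (ha : 2 ≤ a) {c : ℤ}
    (hc : ¬(p : ℤ) ^ 2 ∣ c) {x : ZMod (p ^ a)} (hx : x ^ 2 * c = c) : IsUnit x := by
  have hpZ : Prime (p : ℤ) := Nat.prime_iff_prime_int.mp hp
  obtain ⟨k, rfl⟩ := ZMod.intCast_surjective x
  have hpow : ((p ^ a : ℕ) : ℤ) ∣ (k ^ 2 - 1) * c := by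
    rw [← ZMod.intCast_zmod_eq_zero_iff_dvd]
    push_cast
    rw [sub_mul, one_mul, hx, sub_self]
  have hsq : (p : ℤ) ∣ k ^ 2 - 1 := by
    refine hpZ.dvd_of_sq_dvd_mul_of_not_sq_dvd hc ((pow_dvd_pow _ ha).trans ?_)
    exact_mod_cast hpow
  have hk : ¬(p : ℤ) ∣ k := fun h =>
    hpZ.not_isUnit <| isUnit_of_dvd_one <| by
      simpa using dvd_sub (dvd_pow h two_ne_zero) hsq
  rw [ZMod.coe_int_isUnit_iff_isCoprime, Nat.cast_pow]
  exact (hpZ.coprime_iff_not_dvd.mpr hk).pow_left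

theorem stmt3_general (n p a d : ℕ) (hp : p.Prime) (ha : 2 ≤ a)
    (S : Matrix (Fin (n + 1)) (Fin (n + 1)) ℤ)
    (hdet : S.det.natAbs = d) (hsf : Squarefree d)
    (M : Matrix (Fin (n + 1)) (Fin (n + 1)) (ZMod (p ^ a)))
    (hM : Mᵀ * S.map (fun x => (x : ZMod (p ^ a))) * M = S.map (fun x => (x : ZMod (p ^ a)))) :
    IsUnit M.det ∧ IsUnit M := by
  have hS : ¬(p : ℤ) ^ 2 ∣ S.det := by
    rw [← Int.natCast_pow, Int.natCast_dvd, hdet, sq]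
    exact fun h => hp.not_isUnit (hsf p h)
  have hdetM : M.det ^ 2 * S.det = S.det := by
    rw [Int.cast_det]
    exact det_sq_mul_det_eq_of_transpose_mul_mul_eq hM
  have hunit := ZMod.isUnit_of_sq_mul_eq hp ha hS hdetM
  exact ⟨hunit, (isUnit_iff_isUnit_det M).mpr hunit⟩

/-- If `p` is an odd prime, `a ≥ 2`, and `S` is an integer matrix with `|det S| = d`
odd, square-free and divisible by `p`, then any `M` over `ℤ/p^a` with `Mᵀ S M = S`
has unit determinant, hence is invertible. -/
theorem stmt3 (n p a d : ℕ) (hp : p.Prime) (hpodd : Odd p) (ha : 2 ≤ a)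
    (S : Matrix (Fin (n + 1)) (Fin (n + 1)) ℤ)
    (hdet : S.det.natAbs = d) (hdodd : Odd d) (hsf : Squarefree d) (hpd : p ∣ d)
    (M : Matrix (Fin (n + 1)) (Fin (n + 1)) (ZMod (p ^ a)))
    (hM : Mᵀ * S.map (fun x => (x : ZMod (p ^ a))) * M = S.map (fun x => (x : ZMod (p ^ a)))) :
    IsUnit M.det ∧ IsUnit M :=
  stmt3_general n p a d hp ha S hdet hsf M hM
end

section
/- Let p be an odd prime and n an odd positive integer. Then the order of the orthogonal group O(n, ℤ/p) of n×n matrices A over the field with p elements satisfying Aᵀ A = I equals 2 · ∏_{k=1}^{n-1} (p^k - ε₂(k)), where ε₂(k) = 1 if k is even and 0 if k is odd. -/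
/-!
The orthogonal group `O(m + 1)` acts on the unit sphere `{v | v ⬝ᵥ v = 1}`. Since `2 ≠ 0`, every
unit vector is carried to every other one by a product of at most two reflections, so the action is
transitive, and the stabiliser of the last basis vector is a copy of `O(m)`; hence
`|O(m + 1)| = |Sᵐ| · |O(m)|`.

Over a field with `q` elements and quadratic character `χ`, the number `N_k(c)` of solutions of
`x₁² + ⋯ + x_k² = c` is a convolution of `N_2` with `N_k`, and `N_2` is computed by a Jacobi sum of
`χ`. This gives `N_{k+2}(c) = (q - χ(-1)) q^k + χ(-1) q N_k(c)`, whence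
`N_{2j+3}(1) N_{2j+2}(1) = q^{2j+1} (q^{2j+2} - 1)`: two consecutive sphere sizes contribute
exactly two factors of the product formula.
-/

open Finset Matrix MulAction

section SumSq

variable {F : Type*} [Field F] [Fintype F] [DecidableEq F]

variable (F) in
def sumSqCount (k : ℕ) (c : F) : ℕ := #{v : Fin k → F | v ⬝ᵥ v = c}

lemma sumSqCount_add (k l : ℕ) (c : F) :
    sumSqCount F (k + l) c = ∑ a, sumSqCount F k a * sumSqCount F l (c - a) := by
  have hsplit : sumSqCount F (k + l) c =
      #{x : (Fin k → F) × (Fin l → F) | x.1 ⬝ᵥ x.1 + x.2 ⬝ᵥ x.2 = c} := by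
    refine card_equiv (Fin.appendEquiv k l).symm fun w => ?_
    simp only [mem_filter, mem_univ, true_and]
    simp [dotProduct, Fin.sum_univ_add]
  rw [hsplit, card_eq_sum_card_fiberwise (f := fun x => x.1 ⬝ᵥ x.1) (t := univ) (by simp)]
  refine sum_congr rfl fun a _ => ?_
  rw [sumSqCount, sumSqCount, ← card_product, filter_filter]
  congr 1
  ext ⟨u, v⟩
  simp only [mem_filter, mem_univ, true_and, mem_product]
  constructor
  · rintro ⟨h, rfl⟩
    exact ⟨rfl, by rw [← h]; ring⟩
  · rintro ⟨rfl, h⟩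
    exact ⟨by rw [h]; ring, rfl⟩

lemma sum_sumSqCount (k : ℕ) : ∑ c, sumSqCount F k c = Fintype.card F ^ k := by
  rw [show Fintype.card F ^ k = #(univ : Finset (Fin k → F)) by simp,
    card_eq_sum_card_fiberwise (f := fun v => v ⬝ᵥ v) (t := univ) (by simp)]
  rfl

lemma ncard_dotProduct_self_eq (k : ℕ) (c : F) :
    {v : Fin k → F | v ⬝ᵥ v = c}.ncard = sumSqCount F k c := by
  rw [sumSqCount, ← Set.ncard_coe_finset, coe_filter]
  simp

local notation "χ" => quadraticChar F

lemma quadraticChar_mul_self (a : F) : χ a * χ a = (1 : MulChar F ℤ) a := by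
  rw [← MulChar.mul_apply, ← sq, (quadraticChar_isQuadratic F).sq_eq_one]

lemma sum_quadraticChar_mul_sub (hF : ringChar F ≠ 2) (c : F) :
    ∑ a, χ a * χ (c - a) = if c = 0 then χ (-1) * (Fintype.card F - 1) else -χ (-1) := by
  split_ifs with hc
  · have hsplit (a : F) : χ a * χ (c - a) = χ (-1) * (1 : MulChar F ℤ) a := by
      rw [hc, zero_sub, neg_eq_neg_one_mul a, map_mul, mul_left_comm, quadraticChar_mul_self]
    rw [sum_congr rfl fun a _ => hsplit a, ← mul_sum, MulChar.sum_one_eq_card_units,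
      Fintype.card_eq_card_units_add_one (α := F)]
    push_cast
    ring
  · have hscale (x : F) : χ (c * x) * χ (c - c * x) = χ x * χ (1 - x) := by
      rw [← mul_one_sub, map_mul, map_mul, mul_mul_mul_comm, quadraticChar_mul_self,
        MulChar.one_apply (Ne.isUnit hc), one_mul]
    rw [← Equiv.sum_comp (Equiv.mulLeft₀ c hc)]
    simp only [Equiv.mulLeft₀_apply, hscale]
    rw [← jacobiSum]
    nth_rw 2 [← (quadraticChar_isQuadratic F).inv]
    exact jacobiSum_nontrivial_inv (quadraticChar_ne_one hF)

lemma sumSqCount_one (hF : ringChar F ≠ 2) (a : F) : (sumSqCount F 1 a : ℤ) = χ a + 1 := by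
  rw [← quadraticChar_card_sqrts hF a]
  norm_cast
  refine card_equiv (Equiv.funUnique (Fin 1) F) fun v => ?_
  simp [dotProduct, sq]

lemma sumSqCount_two (hF : ringChar F ≠ 2) (a : F) :
    (sumSqCount F 2 a : ℤ) =
      Fintype.card F - χ (-1) + if a = 0 then Fintype.card F * χ (-1) else 0 := by
  have hshift : ∑ b, χ (a - b) = 0 :=
    (Equiv.sum_comp (Equiv.subLeft a) χ).trans (quadraticChar_sum_zero hF)
  have hexpand (b : F) :
      (χ b + 1) * (χ (a - b) + 1) = χ b * χ (a - b) + χ b + χ (a - b) + 1 := by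
    ring
  rw [sumSqCount_add 1 1]
  push_cast
  simp only [sumSqCount_one hF, hexpand, sum_add_distrib, sum_quadraticChar_mul_sub hF,
    quadraticChar_sum_zero hF, hshift, sum_const, card_univ, nsmul_eq_mul, mul_one]
  split_ifs <;> ring

lemma sumSqCount_add_two (hF : ringChar F ≠ 2) (k : ℕ) (c : F) :
    (sumSqCount F (k + 2) c : ℤ) =
      (Fintype.card F - χ (-1)) * Fintype.card F ^ k +
        χ (-1) * Fintype.card F * sumSqCount F k c := by
  rw [sumSqCount_add k 2]
  push_cast
  simp only [sumSqCount_two hF, mul_add, sum_add_distrib, ← sum_mul, mul_ite, mul_zero,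
    sub_eq_zero]
  rw [sum_ite_eq, if_pos (mem_univ c), ← Nat.cast_sum, sum_sumSqCount]
  push_cast
  ring

lemma sumSqCount_odd_one (hF : ringChar F ≠ 2) (j : ℕ) :
    (sumSqCount F (2 * j + 1) 1 : ℤ) =
      Fintype.card F ^ (2 * j) + χ (-1) ^ j * Fintype.card F ^ j := by
  induction j with
  | zero => simp [sumSqCount_one hF]
  | succ j ih =>
    rw [show 2 * (j + 1) + 1 = 2 * j + 1 + 2 by ring, sumSqCount_add_two hF, ih]
    ring

lemma sumSqCount_even_one (hF : ringChar F ≠ 2) (j : ℕ) :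
    (sumSqCount F (2 * j + 2) 1 : ℤ) =
      Fintype.card F ^ (2 * j + 1) - χ (-1) ^ (j + 1) * Fintype.card F ^ j := by
  induction j with
  | zero => simp [sumSqCount_two hF]
  | succ j ih =>
    rw [show 2 * (j + 1) + 2 = 2 * j + 2 + 2 by ring, sumSqCount_add_two hF, ih]
    ring

lemma sumSqCount_odd_mul_even_one (hF : ringChar F ≠ 2) (j : ℕ) :
    sumSqCount F (2 * j + 3) 1 * sumSqCount F (2 * j + 2) 1 =
      Fintype.card F ^ (2 * j + 1) * (Fintype.card F ^ (2 * j + 2) - 1) := by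
  have hq : 1 ≤ Fintype.card F ^ (2 * j + 2) := Nat.one_le_pow _ _ Fintype.card_pos
  have hε : (χ (-1) ^ (j + 1)) ^ 2 = 1 := by
    rw [← pow_mul, mul_comm, pow_mul, quadraticChar_sq_one (neg_ne_zero.mpr one_ne_zero),
      one_pow]
  zify [hq]
  rw [show 2 * j + 3 = 2 * (j + 1) + 1 by ring, sumSqCount_odd_one hF, sumSqCount_even_one hF]
  linear_combination (-(Fintype.card F : ℤ) ^ (2 * j + 1)) * hε

end SumSq

section OrthogonalGroup

attribute [local instance] starRingOfComm

variable {K : Type*} [Field K]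

section

variable {n : Type*} [Fintype n] [DecidableEq n]

def reflection (z : n → K) : Matrix n n K :=
  1 - (2 / (z ⬝ᵥ z)) • vecMulVec z z

lemma reflection_mulVec (z u : n → K) :
    reflection z *ᵥ u = u - (2 * (z ⬝ᵥ u) / (z ⬝ᵥ z)) • z := by
  rw [reflection, sub_mulVec, one_mulVec, smul_mulVec, vecMulVec_mulVec, op_smul_eq_smul,
    smul_smul, div_mul_eq_mul_div]

lemma reflection_mulVec_self {z : n → K} (hz : z ⬝ᵥ z ≠ 0) : reflection z *ᵥ z = -z := by
  rw [reflection_mulVec, mul_div_assoc, div_self hz]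
  module

lemma reflection_mem_orthogonalGroup {z : n → K} (hz : z ⬝ᵥ z ≠ 0) :
    reflection z ∈ orthogonalGroup n K := by
  have hsymm : (reflection z)ᵀ = reflection z := by
    simp [reflection, transpose_sub, transpose_smul]
  have hinv (u : n → K) : reflection z *ᵥ (reflection z *ᵥ u) = u := by
    rw [reflection_mulVec z u, mulVec_sub, mulVec_smul, reflection_mulVec_self hz,
      reflection_mulVec z u]
    module
  rw [mem_orthogonalGroup_iff', hsymm, ext_iff_mulVec]
  intro u
  rw [← mulVec_mulVec, hinv, one_mulVec]

lemma reflection_sub_mulVec {e v : n → K} (h : e ⬝ᵥ e = v ⬝ᵥ v)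
    (hz : (e - v) ⬝ᵥ (e - v) ≠ 0) : reflection (e - v) *ᵥ e = v := by
  have hdot : 2 * ((e - v) ⬝ᵥ e) = (e - v) ⬝ᵥ (e - v) := by
    simp only [sub_dotProduct, dotProduct_sub, dotProduct_comm v e, h]
    ring
  rw [reflection_mulVec, hdot, div_self hz, one_smul, sub_sub_cancel]

lemma exists_mem_orthogonalGroup_mulVec_eq (h2 : (2 : K) ≠ 0) {e v : n → K}
    (he : e ⬝ᵥ e = 1) (hv : v ⬝ᵥ v = 1) : ∃ A ∈ orthogonalGroup n K, A *ᵥ e = v := by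
  by_cases hz : (e - v) ⬝ᵥ (e - v) = 0
  · -- then `e + v` is anisotropic: the squared lengths of `e - v` and `e + v` add up to `4`
    have hz' : (e - -v) ⬝ᵥ (e - -v) ≠ 0 := by
      have hsum : (e - -v) ⬝ᵥ (e - -v) + (e - v) ⬝ᵥ (e - v) = 2 * 2 := by
        simp only [sub_neg_eq_add, add_dotProduct, dotProduct_add, sub_dotProduct,
          dotProduct_sub, dotProduct_comm v e, he, hv]
        ring
      rw [hz, add_zero] at hsum
      rw [hsum]
      exact mul_ne_zero h2 h2
    have hv0 : v ⬝ᵥ v ≠ 0 := hv ▸ one_ne_zero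
    refine ⟨reflection v * reflection (e - -v),
      mul_mem (reflection_mem_orthogonalGroup hv0) (reflection_mem_orthogonalGroup hz'), ?_⟩
    rw [← mulVec_mulVec,
      reflection_sub_mulVec (by rw [he, dotProduct_neg, neg_dotProduct, neg_neg, hv]) hz',
      mulVec_neg, reflection_mulVec_self hv0, neg_neg]
  · exact ⟨reflection (e - v), reflection_mem_orthogonalGroup hz,
      reflection_sub_mulVec (he.trans hv.symm) hz⟩

lemma dotProduct_mulVec_of_mem_orthogonalGroup {A : Matrix n n K}
    (hA : A ∈ orthogonalGroup n K) (u w : n → K) : (A *ᵥ u) ⬝ᵥ (A *ᵥ w) = u ⬝ᵥ w := by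
  rw [dotProduct_mulVec, ← vecMul_transpose, vecMul_vecMul, (mem_orthogonalGroup_iff' n K).mp hA,
    vecMul_one]

lemma vecMul_eq_self_of_mulVec_eq_self {A : Matrix n n K} (hA : A ∈ orthogonalGroup n K)
    {e : n → K} (h : A *ᵥ e = e) : e ᵥ* A = e := by
  conv_lhs => rw [← h]
  rw [← vecMul_transpose, vecMul_vecMul, (mem_orthogonalGroup_iff' n K).mp hA, vecMul_one]

lemma orbit_orthogonalGroup (h2 : (2 : K) ≠ 0) {e : n → K} (he : e ⬝ᵥ e = 1) :
    orbit (orthogonalGroup n K) e = {v | v ⬝ᵥ v = 1} := by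
  ext v
  constructor
  · rintro ⟨A, rfl⟩
    exact (dotProduct_mulVec_of_mem_orthogonalGroup A.2 e e).trans he
  · intro hv
    obtain ⟨A, hA, hAe⟩ := exists_mem_orthogonalGroup_mulVec_eq h2 he hv
    exact ⟨⟨A, hA⟩, hAe⟩

lemma card_orthogonalGroup_eq_card_transpose_mul_self_eq_one :
    Nat.card (orthogonalGroup n K) = Nat.card {A : Matrix n n K // Aᵀ * A = 1} :=
  Nat.card_congr (Equiv.subtypeEquivRight fun _ => mem_orthogonalGroup_iff' n K)

end

section ExtendByOne

variable {m : ℕ}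

def extendByOne (C : Matrix (Fin m) (Fin m) K) : Matrix (Fin (m + 1)) (Fin (m + 1)) K :=
  reindex finSumFinEquiv finSumFinEquiv (fromBlocks C 0 0 1)

lemma extendByOne_transpose (C : Matrix (Fin m) (Fin m) K) :
    (extendByOne C)ᵀ = extendByOne Cᵀ := by
  simp [extendByOne, fromBlocks_transpose]

lemma extendByOne_mul (C D : Matrix (Fin m) (Fin m) K) :
    extendByOne C * extendByOne D = extendByOne (C * D) := by
  simp [extendByOne, fromBlocks_multiply]

lemma extendByOne_one : extendByOne (1 : Matrix (Fin m) (Fin m) K) = 1 := by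
  simp [extendByOne, fromBlocks_one]

lemma submatrix_castSucc_extendByOne (C : Matrix (Fin m) (Fin m) K) :
    (extendByOne C).submatrix Fin.castSucc Fin.castSucc = C := by
  ext i j
  simp [extendByOne]

lemma extendByOne_col_last (C : Matrix (Fin m) (Fin m) K) :
    (extendByOne C).col (Fin.last m) = Pi.single (Fin.last m) 1 := by
  ext i
  induction i using Fin.lastCases <;> simp [extendByOne, Fin.castSucc_ne_last]

lemma extendByOne_row_last (C : Matrix (Fin m) (Fin m) K) :
    (extendByOne C).row (Fin.last m) = Pi.single (Fin.last m) 1 := by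
  ext j
  induction j using Fin.lastCases <;> simp [extendByOne, Fin.castSucc_ne_last]

lemma eq_extendByOne {M : Matrix (Fin (m + 1)) (Fin (m + 1)) K}
    (hcol : M.col (Fin.last m) = Pi.single (Fin.last m) 1)
    (hrow : M.row (Fin.last m) = Pi.single (Fin.last m) 1) :
    M = extendByOne (M.submatrix Fin.castSucc Fin.castSucc) := by
  ext i j
  induction i using Fin.lastCases with
  | last => exact (congrFun hrow j).trans (congrFun (extendByOne_row_last _) j).symm
  | cast i =>
    induction j using Fin.lastCases with
    | last => exact (congrFun hcol _).trans (congrFun (extendByOne_col_last _) _).symm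
    | cast j => simp [extendByOne]

lemma extendByOne_mem_orthogonalGroup_iff {C : Matrix (Fin m) (Fin m) K} :
    extendByOne C ∈ orthogonalGroup (Fin (m + 1)) K ↔ C ∈ orthogonalGroup (Fin m) K := by
  rw [mem_orthogonalGroup_iff', mem_orthogonalGroup_iff', extendByOne_transpose, extendByOne_mul,
    ← extendByOne_one]
  constructor
  · intro h
    simpa only [submatrix_castSucc_extendByOne] using
      congrArg (submatrix · Fin.castSucc Fin.castSucc) h
  · exact congrArg extendByOne

lemma eq_extendByOne_of_mulVec_single_last {B : Matrix (Fin (m + 1)) (Fin (m + 1)) K}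
    (hB : B ∈ orthogonalGroup (Fin (m + 1)) K)
    (h : B *ᵥ Pi.single (Fin.last m) 1 = Pi.single (Fin.last m) 1) :
    B = extendByOne (B.submatrix Fin.castSucc Fin.castSucc) :=
  eq_extendByOne ((mulVec_single_one B _).symm.trans h)
    ((single_one_vecMul _ B).symm.trans (vecMul_eq_self_of_mulVec_eq_self hB h))

variable (K m) in
def stabilizerSingleLastEquiv :
    stabilizer (orthogonalGroup (Fin (m + 1)) K) (Pi.single (Fin.last m) 1 : Fin (m + 1) → K) ≃
      orthogonalGroup (Fin m) K where
  toFun B := ⟨B.1.1.submatrix Fin.castSucc Fin.castSucc, by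
    rw [← extendByOne_mem_orthogonalGroup_iff,
      ← eq_extendByOne_of_mulVec_single_last B.1.2 (mem_stabilizer_iff.mp B.2)]
    exact B.1.2⟩
  invFun C := ⟨⟨extendByOne C.1, extendByOne_mem_orthogonalGroup_iff.mpr C.2⟩, by
    rw [mem_stabilizer_iff]
    exact (mulVec_single_one _ _).trans (extendByOne_col_last C.1)⟩
  left_inv B := Subtype.ext <| Subtype.ext
    (eq_extendByOne_of_mulVec_single_last B.1.2 (mem_stabilizer_iff.mp B.2)).symm
  right_inv C := Subtype.ext (submatrix_castSucc_extendByOne C.1)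

end ExtendByOne

theorem card_orthogonalGroup_succ (h2 : (2 : K) ≠ 0) (m : ℕ) :
    Nat.card (orthogonalGroup (Fin (m + 1)) K) =
      {v : Fin (m + 1) → K | v ⬝ᵥ v = 1}.ncard * Nat.card (orthogonalGroup (Fin m) K) := by
  rw [← Subgroup.card_mul_index (stabilizer _ (Pi.single (Fin.last m) 1 : Fin (m + 1) → K)),
    index_stabilizer, orbit_orthogonalGroup h2 (by simp),
    Nat.card_congr (stabilizerSingleLastEquiv K m), mul_comm]

theorem card_orthogonalGroup_fin_two_mul_add_one {F : Type*} [Field F] [Fintype F]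
    [DecidableEq F] (hF : ringChar F ≠ 2) (j : ℕ) :
    Nat.card (orthogonalGroup (Fin (2 * j + 1)) F) =
      2 * ∏ k ∈ Icc 1 (2 * j), (Fintype.card F ^ k - if Even k then 1 else 0) := by
  have hstep (m : ℕ) : Nat.card (orthogonalGroup (Fin (m + 1)) F) =
      sumSqCount F (m + 1) 1 * Nat.card (orthogonalGroup (Fin m) F) := by
    rw [card_orthogonalGroup_succ (Ring.two_ne_zero hF), ncard_dotProduct_self_eq]
  induction j with
  | zero =>
    have hsphere : sumSqCount F 1 1 = 2 := by
      have h := sumSqCount_one hF 1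
      rw [map_one] at h
      exact_mod_cast h
    simp [hstep 0, hsphere]
  | succ j ih =>
    rw [show 2 * (j + 1) + 1 = 2 * j + 2 + 1 by ring, hstep, hstep, ← mul_assoc,
      sumSqCount_odd_mul_even_one hF, ih, show 2 * (j + 1) = 2 * j + 1 + 1 by ring,
      prod_Icc_succ_top (by omega), prod_Icc_succ_top (by omega)]
    simp only [Nat.not_even_bit1, ↓reduceIte, tsub_zero, Nat.even_mul, even_two, true_or,
      Even.add_one, Odd.add_one]
    ring

end OrthogonalGroup

theorem stmt6_general (p n : ℕ) (hp : p.Prime) (hpodd : Odd p) (hn : Odd n) :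
    Nat.card {A : Matrix (Fin n) (Fin n) (ZMod p) // Aᵀ * A = 1} =
      2 * ∏ k ∈ Finset.Icc 1 (n - 1), (p ^ k - if Even k then 1 else 0) := by
  have : Fact p.Prime := ⟨hp⟩
  have hchar : ringChar (ZMod p) ≠ 2 := by
    rw [ZMod.ringChar_zmod_n]
    rintro rfl
    exact Nat.not_odd_iff_even.mpr even_two hpodd
  obtain ⟨j, rfl⟩ := hn
  rw [← card_orthogonalGroup_eq_card_transpose_mul_self_eq_one,
    card_orthogonalGroup_fin_two_mul_add_one hchar, ZMod.card, Nat.add_sub_cancel]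

/-- For an odd prime `p` and odd positive `n`,
`|O(n, ℤ/p)| = 2 · ∏_{k=1}^{n-1} (p^k - ε₂(k))`. -/
theorem stmt6 (p n : ℕ) (hp : p.Prime) (hpodd : Odd p) (hn : Odd n) (h1 : 0 < n) :
    Nat.card {A : Matrix (Fin n) (Fin n) (ZMod p) // Aᵀ * A = 1} =
      2 * ∏ k ∈ Finset.Icc 1 (n - 1), (p ^ k - if Even k then 1 else 0) :=
  stmt6_general p n hp hpodd hn
end

section
/- Let p be an odd prime and n an even positive integer. Then the order of O(n, ℤ/p) = {A : Aᵀ A = I} over the field with p elements equals 2 p^{n/2 - 1} (p^{n/2} - χ(p)^{n/2}) · ∏_{k=1}^{n-2} (p^k - ε₂(k)), where χ(p) = (-1/p) is the Legendre symbol of -1 mod p and ε₂(k) = 1 if k is even, 0 otherwise. -/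
/-
Reading off the columns, an orthogonal matrix is an orthonormal frame, and such frames are counted
one vector at a time: the isometries act transitively on the unit vectors (a unit vector `u` is the
image of `e` under the reflection in `u - e`, or under minus the reflection in `u + e`), and the
frames starting with `e₁` are the frames of `e₁ᗮ ≅ F^(n-1)`. So `|O(n)| = ∏_{j ≤ n} N_j`, where
`N_j` counts the solutions of `x₁² + ⋯ + x_j² = 1`. Splitting off two coordinates and counting the
solutions of `a² + b² = c` with a Jacobi sum of the quadratic character `χ` gives
`N_{m+2} = (q - χ(-1)) q^m + q χ(-1) N_m`, hence `N_{2k+1} = q^k (q^k + χ(-1)^k)` and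
`N_{2k+2} = q^k (q^(k+1) - χ(-1)^(k+1))`, and the product of these is the stated formula.
-/

open Finset Matrix

section DotProductSplitting

variable {R : Type*} [Ring R] [Fintype R] [DecidableEq R] {ι κ : Type*} [Fintype ι]
  [Fintype κ] [DecidableEq ι] [DecidableEq κ]

theorem card_dotProduct_self_eq_of_equiv (e : ι ≃ κ) (c : R) :
    Fintype.card {x : ι → R // x ⬝ᵥ x = c} = Fintype.card {x : κ → R // x ⬝ᵥ x = c} :=
  Fintype.card_congr <| (Equiv.arrowCongr e (Equiv.refl R)).subtypeEquiv fun x => by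
    simp only [Equiv.arrowCongr_apply, Equiv.coe_refl, Function.comp_apply, id_eq, dotProduct]
    rw [Equiv.sum_comp e.symm fun i => x i * x i]

theorem card_dotProduct_self_eq_sum (c : R) :
    Fintype.card {x : ι ⊕ κ → R // x ⬝ᵥ x = c} =
      ∑ v : ι → R, Fintype.card {w : κ → R // w ⬝ᵥ w = c - v ⬝ᵥ v} := by
  rw [← Fintype.card_sigma]
  refine Fintype.card_congr <| ((Equiv.sumArrowEquivProdArrow ι κ R).subtypeEquiv
    fun x => ?_).trans (Equiv.subtypeProdEquivSigmaSubtype fun v w => w ⬝ᵥ w = c - v ⬝ᵥ v)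
  simp only [Equiv.sumArrowEquivProdArrow, Equiv.coe_fn_mk, eq_sub_iff_add_eq, dotProduct,
    Fintype.sum_sum_type, Function.comp_apply, add_comm]

end DotProductSplitting

section SumsOfSquares

variable {F : Type*} [Field F] [Fintype F] [DecidableEq F]

local notation "q" => (Fintype.card F : ℤ)
local notation "χ" => quadraticChar F

theorem card_filter_sq_eq (hF : ringChar F ≠ 2) (c : F) :
    (#{a : F | a ^ 2 = c} : ℤ) = χ c + 1 := by
  rw [← quadraticChar_card_sqrts hF, Set.toFinset_ofPred]

theorem sum_quadraticChar_mul_quadraticChar_sub (hF : ringChar F ≠ 2) (c : F) :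
    ∑ t : F, χ t * χ (c - t) = if c = 0 then (q - 1) * χ (-1) else -χ (-1) := by
  split_ifs with hc
  · subst hc
    have hsq (t : F) : χ t * χ (0 - t) = χ (-1) * (1 - if t = 0 then 1 else 0) := by
      split_ifs with ht
      · simp [ht]
      · rw [zero_sub, neg_eq_neg_one_mul, map_mul, sub_zero, mul_one, mul_left_comm, ← sq,
          quadraticChar_sq_one ht, mul_one]
    simp_rw [hsq, ← mul_sum, sum_sub_distrib, sum_ite_eq', sum_const, card_univ]
    simp [mul_comm]
  · have hscale (s : F) : χ (c * s) * χ (c - c * s) = χ s * χ (1 - s) := by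
      rw [← mul_one_sub, map_mul, map_mul, mul_mul_mul_comm, ← sq, quadraticChar_sq_one hc,
        one_mul]
    rw [← Equiv.sum_comp (Equiv.mulLeft₀ c hc)]
    simp only [Equiv.mulLeft₀_apply, hscale]
    conv_lhs => enter [2, s, 2]; rw [← (quadraticChar_isQuadratic F).inv]
    exact jacobiSum_nontrivial_inv (quadraticChar_ne_one hF)

theorem sum_quadraticChar_sub_sq (hF : ringChar F ≠ 2) (c : F) :
    ∑ a : F, χ (c - a ^ 2) = -χ (-1) + if c = 0 then q * χ (-1) else 0 := by
  have hfiber : ∑ a : F, χ (c - a ^ 2) = ∑ t : F, (χ t + 1) * χ (c - t) := by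
    rw [← Finset.sum_fiberwise univ (· ^ 2)]
    refine sum_congr rfl fun t _ => ?_
    rw [sum_congr rfl fun a ha => by rw [(mem_filter.mp ha).2], sum_const, nsmul_eq_mul,
      card_filter_sq_eq hF]
  rw [hfiber]
  simp_rw [add_one_mul, sum_add_distrib, sum_quadraticChar_mul_quadraticChar_sub hF]
  have hshift : ∑ t : F, χ (c - t) = 0 := by
    rw [← Equiv.sum_comp (Equiv.subLeft c), ← quadraticChar_sum_zero hF]
    simp
  rw [hshift]
  split_ifs <;> ring

theorem card_dotProduct_self_eq_fin_one (hF : ringChar F ≠ 2) (c : F) :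
    (Fintype.card {x : Fin 1 → F // x ⬝ᵥ x = c} : ℤ) = χ c + 1 := by
  rw [← card_filter_sq_eq hF, ← Fintype.card_subtype]
  exact congrArg _ <| Fintype.card_congr <| (Equiv.funUnique (Fin 1) F).subtypeEquiv fun x => by
    simp [dotProduct, sq]

theorem card_dotProduct_self_eq_fin_two (hF : ringChar F ≠ 2) (c : F) :
    (Fintype.card {x : Fin 2 → F // x ⬝ᵥ x = c} : ℤ) =
      q - χ (-1) + if c = 0 then q * χ (-1) else 0 := by
  rw [card_dotProduct_self_eq_of_equiv (finSumFinEquiv (m := 1) (n := 1)).symm,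
    card_dotProduct_self_eq_sum]
  push_cast
  simp_rw [card_dotProduct_self_eq_fin_one hF]
  rw [← Equiv.sum_comp (Equiv.funUnique (Fin 1) F).symm]
  simp only [sum_add_distrib, dotProduct, univ_unique, sum_singleton, Equiv.funUnique_symm_apply,
    uniqueElim_default, ← sq, sum_quadraticChar_sub_sq hF, sum_const, card_univ, nsmul_one]
  ring

theorem card_dotProduct_self_eq_one_fin_add_two (hF : ringChar F ≠ 2) (m : ℕ) :
    (Fintype.card {x : Fin (m + 2) → F // x ⬝ᵥ x = 1} : ℤ) =
      (q - χ (-1)) * q ^ m + q * χ (-1) * Fintype.card {x : Fin m → F // x ⬝ᵥ x = 1} := by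
  rw [card_dotProduct_self_eq_of_equiv finSumFinEquiv.symm, card_dotProduct_self_eq_sum]
  push_cast
  simp_rw [card_dotProduct_self_eq_fin_two hF, sub_eq_zero, eq_comm (a := (1 : F))]
  rw [sum_add_distrib, ← sum_filter, Fintype.card_subtype]
  simp only [sum_const, card_univ, Fintype.card_fun, Fintype.card_fin, nsmul_eq_mul]
  push_cast
  ring

theorem card_dotProduct_self_eq_one_fin_odd (hF : ringChar F ≠ 2) (k : ℕ) :
    (Fintype.card {x : Fin (2 * k + 1) → F // x ⬝ᵥ x = 1} : ℤ) =
      q ^ (2 * k) + χ (-1) ^ k * q ^ k := by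
  induction k with
  | zero => norm_num [card_dotProduct_self_eq_fin_one hF]
  | succ k ih =>
    rw [show 2 * (k + 1) + 1 = 2 * k + 1 + 2 by ring, card_dotProduct_self_eq_one_fin_add_two hF,
      ih]
    ring

theorem card_dotProduct_self_eq_one_fin_even (hF : ringChar F ≠ 2) (k : ℕ) :
    (Fintype.card {x : Fin (2 * k + 2) → F // x ⬝ᵥ x = 1} : ℤ) =
      q ^ (2 * k + 1) - χ (-1) ^ (k + 1) * q ^ k := by
  induction k with
  | zero => simp only [card_dotProduct_self_eq_fin_two hF, one_ne_zero, if_false]; ring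
  | succ k ih =>
    rw [show 2 * (k + 1) + 2 = 2 * k + 2 + 2 by ring, card_dotProduct_self_eq_one_fin_add_two hF,
      ih]
    ring

theorem prod_card_dotProduct_self_eq_one (hF : ringChar F ≠ 2) (t : ℕ) :
    ∏ j ∈ range (2 * t + 2), (Fintype.card {x : Fin (j + 1) → F // x ⬝ᵥ x = 1} : ℤ) =
      2 * q ^ t * (q ^ (t + 1) - χ (-1) ^ (t + 1)) *
        ∏ k ∈ Icc 1 (2 * t), (q ^ k - if Even k then 1 else 0) := by
  induction t with
  | zero =>
    simp only [Nat.mul_zero, zero_add, prod_range_succ, range_zero, prod_empty, Nat.reduceAdd,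
      card_dotProduct_self_eq_fin_one hF, card_dotProduct_self_eq_fin_two hF]
    simp
  | succ t ih =>
    rw [show 2 * (t + 1) + 2 = 2 * t + 2 + 1 + 1 by ring, prod_range_succ, prod_range_succ, ih,
      show 2 * t + 2 + 1 = 2 * (t + 1) + 1 by ring, card_dotProduct_self_eq_one_fin_odd hF,
      show 2 * (t + 1) + 1 + 1 = 2 * (t + 1) + 2 by ring, card_dotProduct_self_eq_one_fin_even hF,
      show 2 * (t + 1) = 2 * t + 1 + 1 by ring, prod_Icc_succ_top (by omega),
      prod_Icc_succ_top (by omega), if_neg (Nat.not_even_two_mul_add_one t),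
      if_pos (by simp [parity_simps])]
    -- `q^(2t+2) - 1 = (q^(t+1) - χ(-1)^(t+1)) (q^(t+1) + χ(-1)^(t+1))` as `χ(-1)² = 1`
    have hε : χ (-1) ^ (t + 1) * χ (-1) ^ (t + 1) = 1 := by
      rw [← pow_add, ← two_mul, pow_mul, quadraticChar_sq_one (neg_ne_zero.mpr one_ne_zero),
        one_pow]
    linear_combination (-2 * q ^ (3 * t + 2) * (q ^ (t + 2) - χ (-1) ^ (t + 2)) *
      ∏ k ∈ Icc 1 (2 * t), (q ^ k - if Even k then 1 else 0)) * hε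

end SumsOfSquares

section Reflections

variable {F ι : Type*} [Field F] [Fintype ι]

def orthoReflection (w x : ι → F) : ι → F := x - (2 * (x ⬝ᵥ w) / (w ⬝ᵥ w)) • w

variable {w : ι → F}

theorem orthoReflection_dotProduct_eq_neg (hw : w ⬝ᵥ w ≠ 0) (x : ι → F) :
    orthoReflection w x ⬝ᵥ w = -(x ⬝ᵥ w) := by
  rw [orthoReflection, sub_dotProduct, smul_dotProduct, smul_eq_mul]
  field_simp
  ring

theorem orthoReflection_involutive (hw : w ⬝ᵥ w ≠ 0) :
    Function.Involutive (orthoReflection w) := fun x => by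
  have h := orthoReflection_dotProduct_eq_neg hw x
  simp only [orthoReflection] at h ⊢
  rw [h]
  module

theorem orthoReflection_dotProduct_orthoReflection (hw : w ⬝ᵥ w ≠ 0) (x y : ι → F) :
    orthoReflection w x ⬝ᵥ orthoReflection w y = x ⬝ᵥ y := by
  simp only [orthoReflection, sub_dotProduct, dotProduct_sub, smul_dotProduct, dotProduct_smul,
    smul_eq_mul, dotProduct_comm w y]
  field_simp
  ring

theorem orthoReflection_sub_apply {e u : ι → F} (he : e ⬝ᵥ e = 1) (hu : u ⬝ᵥ u = 1)
    (hw : (u - e) ⬝ᵥ (u - e) ≠ 0) : orthoReflection (u - e) e = u := by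
  have hww : (u - e) ⬝ᵥ (u - e) = -2 * (e ⬝ᵥ (u - e)) := by
    simp only [sub_dotProduct, dotProduct_sub, he, hu, dotProduct_comm u e]
    ring
  have hcoeff : 2 * (e ⬝ᵥ (u - e)) / ((u - e) ⬝ᵥ (u - e)) = -1 := by
    rw [div_eq_iff hw, hww]
    ring
  rw [orthoReflection, hcoeff]
  module

theorem exists_isometry_apply_eq (h2 : (2 : F) ≠ 0) {e u : ι → F} (he : e ⬝ᵥ e = 1)
    (hu : u ⬝ᵥ u = 1) :
    ∃ g : Equiv.Perm (ι → F), (∀ x y, g x ⬝ᵥ g y = x ⬝ᵥ y) ∧ g e = u := by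
  by_cases hw : (u - e) ⬝ᵥ (u - e) = 0
  · -- the squares of `u - e` and `-u - e` add up to `4`
    have hw' : (-u - e) ⬝ᵥ (-u - e) ≠ 0 := by
      have hsum : (u - e) ⬝ᵥ (u - e) + (-u - e) ⬝ᵥ (-u - e) = 2 * 2 := by
        simp only [sub_dotProduct, dotProduct_sub, neg_dotProduct, dotProduct_neg, he, hu]
        ring
      rw [hw, zero_add] at hsum
      rw [hsum]
      exact mul_ne_zero h2 h2
    refine ⟨(Function.Involutive.toPerm _ (orthoReflection_involutive hw')).trans (Equiv.neg _),
      fun x y => ?_, ?_⟩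
    · simp [orthoReflection_dotProduct_orthoReflection hw']
    · simp [orthoReflection_sub_apply he (by rwa [neg_dotProduct_neg]) hw']
  · exact ⟨Function.Involutive.toPerm _ (orthoReflection_involutive hw),
      orthoReflection_dotProduct_orthoReflection hw, orthoReflection_sub_apply he hu hw⟩

end Reflections

section Frames

variable {F : Type*} [Field F]

variable (F) in
abbrev OrthonormalFrame (ι : Type*) [Fintype ι] (k : ℕ) :=
  {v : Fin k → ι → F // ∀ i j, v i ⬝ᵥ v j = if i = j then 1 else 0}

theorem dotProduct_orthonormal_vecCons_iff {ι : Type*} [Fintype ι] {k : ℕ} (u : ι → F)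
    (v : Fin k → ι → F) :
    (∀ i j, vecCons u v i ⬝ᵥ vecCons u v j = if i = j then 1 else 0) ↔
      u ⬝ᵥ u = 1 ∧ (∀ i j, v i ⬝ᵥ v j = if i = j then 1 else 0) ∧ ∀ i, v i ⬝ᵥ u = 0 := by
  simp only [Fin.forall_fin_succ, cons_val_zero, cons_val_succ, Fin.succ_inj, if_true,
    (Fin.succ_ne_zero _).symm, Fin.succ_ne_zero, if_false, dotProduct_comm u, forall_and]
  tauto

theorem vecCons_zero_dotProduct_vecCons_zero {n : ℕ} (x y : Fin n → F) :
    vecCons 0 x ⬝ᵥ vecCons 0 y = x ⬝ᵥ y := by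
  simp

def orthonormalHeadZeroEquiv (n k : ℕ) :
    {v : Fin k → Fin (n + 1) → F //
        (∀ i j, v i ⬝ᵥ v j = if i = j then 1 else 0) ∧ ∀ i, v i 0 = 0} ≃
      OrthonormalFrame F (Fin n) k where
  toFun v := ⟨fun i => vecTail (v.1 i), fun i j => by
    rw [← v.2.1 i j, ← cons_head_tail (v.1 i), ← cons_head_tail (v.1 j), vecHead, vecHead,
      v.2.2, v.2.2, vecCons_zero_dotProduct_vecCons_zero]⟩
  invFun w := ⟨fun i => vecCons 0 (w.1 i),
    fun i j => by rw [vecCons_zero_dotProduct_vecCons_zero, w.2], by simp⟩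
  left_inv v := by
    ext i : 2
    have h := cons_head_tail (v.1 i)
    rwa [vecHead, v.2.2] at h
  right_inv w := by ext; simp

theorem card_orthonormal_orthogonal_unit_eq (h2 : (2 : F) ≠ 0) [Fintype F] [DecidableEq F]
    {n : ℕ} (k : ℕ) {u : Fin (n + 1) → F} (hu : u ⬝ᵥ u = 1) :
    Fintype.card {v : Fin k → Fin (n + 1) → F //
        (∀ i j, v i ⬝ᵥ v j = if i = j then 1 else 0) ∧ ∀ i, v i ⬝ᵥ u = 0} =
      Fintype.card (OrthonormalFrame F (Fin n) k) := by
  obtain ⟨g, hg, hgu⟩ := exists_isometry_apply_eq h2 (e := vecCons 1 0) (by simp) hu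
  refine Fintype.card_congr <| (Equiv.subtypeEquiv (Equiv.piCongrRight fun _ => g.symm)
    (q := fun v => (∀ i j, v i ⬝ᵥ v j = if i = j then 1 else 0) ∧ ∀ i, v i 0 = 0)
    fun v => ?_).trans (orthonormalHeadZeroEquiv n k)
  have hsymm (x y) : g.symm x ⬝ᵥ g.symm y = x ⬝ᵥ y := by
    simpa using (hg (g.symm x) (g.symm y)).symm
  have hhead (x) : g.symm x 0 = x ⬝ᵥ u := by
    rw [← hsymm, ← hgu, Equiv.symm_apply_apply]
    simp [vecHead]
  simp only [Equiv.piCongrRight_apply, Pi.map_apply, hsymm, hhead]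

theorem card_orthonormalFrame_fin_succ (h2 : (2 : F) ≠ 0) [Fintype F] [DecidableEq F]
    (n k : ℕ) :
    Fintype.card (OrthonormalFrame F (Fin (n + 1)) (k + 1)) =
      Fintype.card {x : Fin (n + 1) → F // x ⬝ᵥ x = 1} *
        Fintype.card (OrthonormalFrame F (Fin n) k) := by
  have hfiber (u : Fin (n + 1) → F) :
      Fintype.card {v : Fin k → Fin (n + 1) → F // u ⬝ᵥ u = 1 ∧
          (∀ i j, v i ⬝ᵥ v j = if i = j then 1 else 0) ∧ ∀ i, v i ⬝ᵥ u = 0} =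
        if u ⬝ᵥ u = 1 then Fintype.card (OrthonormalFrame F (Fin n) k) else 0 := by
    split_ifs with hu
    · simp only [hu, true_and]
      exact card_orthonormal_orthogonal_unit_eq h2 k hu
    · simp [hu]
  rw [← Fintype.card_congr ((Equiv.subtypeProdEquivSigmaSubtype fun u (v : Fin k → _) =>
      u ⬝ᵥ u = 1 ∧ (∀ i j, v i ⬝ᵥ v j = if i = j then 1 else 0) ∧
        ∀ i, v i ⬝ᵥ u = 0).symm.trans
      ((Fin.consEquiv fun _ => Fin (n + 1) → F).subtypeEquiv
        fun p => (dotProduct_orthonormal_vecCons_iff p.1 p.2).symm)),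
    Fintype.card_sigma]
  simp_rw [hfiber]
  rw [← sum_filter, sum_const, smul_eq_mul, ← Fintype.card_subtype]

theorem card_orthonormalFrame_fin (h2 : (2 : F) ≠ 0) [Fintype F] [DecidableEq F] (n : ℕ) :
    Fintype.card (OrthonormalFrame F (Fin n) n) =
      ∏ j ∈ range n, Fintype.card {x : Fin (j + 1) → F // x ⬝ᵥ x = 1} := by
  induction n with
  | zero =>
    exact Fintype.card_eq_one_iff.mpr
      ⟨⟨![], fun i => i.elim0⟩, fun v => Subtype.ext (Subsingleton.elim _ _)⟩
  | succ n ih => rw [card_orthonormalFrame_fin_succ h2, ih, prod_range_succ, mul_comm]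

theorem card_transpose_mul_self_eq_one [Fintype F] [DecidableEq F] (n : ℕ) :
    Nat.card {A : Matrix (Fin n) (Fin n) F // Aᵀ * A = 1} =
      Fintype.card (OrthonormalFrame F (Fin n) n) := by
  rw [Nat.card_eq_fintype_card]
  refine Fintype.card_congr <| (Matrix.transposeAddEquiv (Fin n) (Fin n) F).toEquiv.subtypeEquiv
    fun A => ?_
  rw [← Matrix.ext_iff]
  rfl

end Frames

/-- For an odd prime `p` and even positive `n`,
`|O(n, ℤ/p)| = 2 p^{n/2-1}(p^{n/2} - (-1/p)^{n/2}) · ∏_{k=1}^{n-2} (p^k - ε₂(k))`,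
where `(-1/p)` is the Legendre symbol. -/
theorem stmt7 (p n : ℕ) [Fact p.Prime] (hpodd : Odd p) (hn : Even n) (h1 : 0 < n) :
    (Nat.card {A : Matrix (Fin n) (Fin n) (ZMod p) // Aᵀ * A = 1} : ℤ) =
      2 * (p : ℤ) ^ (n / 2 - 1) * ((p : ℤ) ^ (n / 2) - (legendreSym p (-1)) ^ (n / 2)) *
        ∏ k ∈ Finset.Icc 1 (n - 2), ((p : ℤ) ^ k - if Even k then 1 else 0) := by
  have hF : ringChar (ZMod p) ≠ 2 := by
    rw [ZMod.ringChar_zmod_n]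
    exact hpodd.ne_two_of_dvd_nat (dvd_refl p)
  obtain ⟨r, hr⟩ := hn
  obtain ⟨t, rfl⟩ : ∃ t, n = 2 * t + 2 := ⟨r - 1, by omega⟩
  rw [card_transpose_mul_self_eq_one, card_orthonormalFrame_fin (Ring.two_ne_zero hF)]
  push_cast
  rw [prod_card_dotProduct_self_eq_one hF, ZMod.card,
    show (2 * t + 2) / 2 = t + 1 by omega, Nat.add_sub_cancel, legendreSym, Int.cast_neg,
    Int.cast_one]
end

section
/- For every odd positive integer n ≥ 3, ∏_{k=1}^{n} π^{-k/2} Γ(k/2) = ∏_{k=1}^{(n-1)/2} 2(2k-1)!/(2π)^{2k}. -/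
open Real

/-! The factors `π^{-k/2} Γ(k/2)` for `k = 2j, 2j + 1` pair up through Legendre's duplication
formula `Γ(s) Γ(s + 1/2) = 2^{1-2s} √π Γ(2s)` at `s = j`, giving `2 (2j-1)! / (2π)^{2j}`;
the remaining factor `k = 1` is `π^{-1/2} Γ(1/2) = 1`. -/

noncomputable def piGammaHalf (k : ℕ) : ℝ := π ^ (-(k : ℝ) / 2) * Gamma ((k : ℝ) / 2)

lemma piGammaHalf_one : piGammaHalf 1 = 1 := by
  have hsqrt : √π ≠ 0 := by positivity
  rw [piGammaHalf, Nat.cast_one, neg_div, rpow_neg pi_pos.le, ← sqrt_eq_rpow,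
    Gamma_one_half_eq, inv_mul_cancel₀ hsqrt]

lemma pi_rpow_neg_mul_Gamma_mul_add_half (s : ℝ) :
    π ^ (-s) * Gamma s * (π ^ (-(s + 1 / 2)) * Gamma (s + 1 / 2)) =
      2 * (2 * π) ^ (-(2 * s)) * Gamma (2 * s) := by
  have hπ := pi_pos
  have hsqrt : √π ≠ 0 := by positivity
  have hpi : π ^ (-(s + 1 / 2)) = π ^ (-s) * (√π)⁻¹ := by
    rw [neg_add, rpow_add hπ, sqrt_eq_rpow, rpow_neg hπ.le (1 / 2)]
  have hpi_sq : π ^ (-s) * π ^ (-s) = π ^ (-(2 * s)) := by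
    rw [← rpow_add hπ]; ring_nf
  have htwo : (2 : ℝ) ^ (1 - 2 * s) = 2 * 2 ^ (-(2 * s)) := by
    rw [sub_eq_add_neg, rpow_add two_pos, rpow_one]
  calc π ^ (-s) * Gamma s * (π ^ (-(s + 1 / 2)) * Gamma (s + 1 / 2))
      = π ^ (-s) * π ^ (-s) * (√π)⁻¹ * (Gamma s * Gamma (s + 1 / 2)) := by rw [hpi]; ring
    _ = 2 * (2 ^ (-(2 * s)) * π ^ (-(2 * s))) * Gamma (2 * s) := by
      rw [Gamma_mul_Gamma_add_half, hpi_sq, htwo]; field_simp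
    _ = 2 * (2 * π) ^ (-(2 * s)) * Gamma (2 * s) := by rw [mul_rpow zero_le_two hπ.le]

lemma piGammaHalf_mul_piGammaHalf_succ (m : ℕ) :
    piGammaHalf (2 * m + 2) * piGammaHalf (2 * m + 3) =
      2 * ((2 * m + 1).factorial : ℝ) / (2 * π) ^ (2 * m + 2) := by
  have key := pi_rpow_neg_mul_Gamma_mul_add_half ((m : ℝ) + 1)
  have hfac : Gamma (2 * ((m : ℝ) + 1)) = (2 * m + 1).factorial := by
    rw [← Gamma_nat_eq_factorial]; push_cast; ring_nf
  have hpow : (2 * π) ^ (-(2 * ((m : ℝ) + 1))) = ((2 * π) ^ (2 * m + 2))⁻¹ := by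
    rw [← rpow_natCast, ← rpow_neg (by positivity)]; push_cast; ring_nf
  rw [hfac, hpow, ← div_eq_mul_inv, div_mul_eq_mul_div] at key
  rw [← key, piGammaHalf, piGammaHalf]
  push_cast
  ring_nf

lemma prod_piGammaHalf_Icc_odd (m : ℕ) :
    ∏ k ∈ Finset.Icc 1 (2 * m + 1), piGammaHalf k =
      ∏ k ∈ Finset.Icc 1 m, 2 * ((2 * k - 1).factorial : ℝ) / (2 * π) ^ (2 * k) := by
  induction m with
  | zero => simp [piGammaHalf_one]
  | succ m ih =>
    rw [show 2 * (m + 1) + 1 = 2 * m + 1 + 1 + 1 by ring, Finset.prod_Icc_succ_top (by omega),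
      Finset.prod_Icc_succ_top (by omega), ih, Finset.prod_Icc_succ_top (by omega), mul_assoc,
      mul_add_one 2 m, show 2 * m + 2 - 1 = 2 * m + 1 by omega, piGammaHalf_mul_piGammaHalf_succ]

theorem stmt16_general (n : ℕ) (hn : Odd n) :
    ∏ k ∈ Finset.Icc 1 n, π ^ (-(k : ℝ) / 2) * Real.Gamma ((k : ℝ) / 2) =
      ∏ k ∈ Finset.Icc 1 ((n - 1) / 2), 2 * ((2 * k - 1).factorial : ℝ) / (2 * π) ^ (2 * k) := by
  obtain ⟨m, rfl⟩ := hn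
  rw [show (2 * m + 1 - 1) / 2 = m by omega]
  exact prod_piGammaHalf_Icc_odd m

/-- For every odd integer `n ≥ 3`,
`∏_{k=1}^{n} π^{-k/2} Γ(k/2) = ∏_{k=1}^{(n-1)/2} 2(2k-1)!/(2π)^{2k}`. -/
theorem stmt16 (n : ℕ) (hn : Odd n) (h3 : 3 ≤ n) :
    ∏ k ∈ Finset.Icc 1 n, π ^ (-(k : ℝ) / 2) * Real.Gamma ((k : ℝ) / 2) =
      ∏ k ∈ Finset.Icc 1 ((n - 1) / 2), 2 * ((2 * k - 1).factorial : ℝ) / (2 * π) ^ (2 * k) :=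
  stmt16_general n hn
end
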